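/- Lyapunov-based symbolic model theorem (Theorem 6.8): if Σ admits a δ-ISS Lyapunov function V with bounds α₁(‖x−x'‖) ≤ V(x,x') ≤ α₂(‖x−x'‖), the decay property V(f(x,u), f(x',u')) ≤ max{κ(V(x,x')), λ(‖u−u'‖)} with κ, λ ∈ K∞ and κ(s) < s, and the triangle-type bound V(x,x') − V(x',x'') ≤ γ̂(‖x−x''‖), and if the quantization parameters satisfy α₂(η) ≤ α₁(α⁻¹(ε)) and max{κ(α₁(α⁻¹(ε))), λ(μ)} + γ̂(η) ≤ α₁(α⁻¹(ε)), then the relation R = {(x, x_q) : V(x, x_q) ≤ α₁(α⁻¹(ε))} is an ε-InitSOP simulation relation from S(Σ) to S_q(Σ). -/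
import Mathlib


open Metric Set Filter

section Defs

variable {X U Y Xa Ua Xb Ub : Type*}

/-- ε-approximate initial-state opacity preserving simulation relation from
system `a` to system `b`. -/
def InitSOPSim [MetricSpace Y] (Xa0 XaS : Set Xa) (tra : Xa → Ua → Xa → Prop)
    (Ha : Xa → Y) (Xb0 XbS : Set Xb) (trb : Xb → Ub → Xb → Prop) (Hb : Xb → Y)
    (ε : ℝ) (R : Set (Xa × Xb)) : Prop :=
  (∀ xa0 ∈ Xa0 ∩ XaS, ∃ xb0 ∈ Xb0 ∩ XbS, (xa0, xb0) ∈ R) ∧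
  (∀ xb0 ∈ Xb0 \ XbS, ∃ xa0 ∈ Xa0 \ XaS, (xa0, xb0) ∈ R) ∧
  (∀ p ∈ R, dist (Ha p.1) (Hb p.2) ≤ ε) ∧
  (∀ p ∈ R, ∀ (ua : Ua) (xa' : Xa), tra p.1 ua xa' →
    ∃ (ub : Ub) (xb' : Xb), trb p.2 ub xb' ∧ (xa', xb') ∈ R) ∧
  (∀ p ∈ R, ∀ (ub : Ub) (xb' : Xb), trb p.2 ub xb' →
    ∃ (ua : Ua) (xa' : Xa), tra p.1 ua xa' ∧ (xa', xb') ∈ R)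

/-- Class K function (continuous, strictly increasing on `[0,∞)`, zero at zero). -/
def ClassK (α : ℝ → ℝ) : Prop :=
  ContinuousOn α (Ici 0) ∧ StrictMonoOn α (Ici 0) ∧ α 0 = 0

/-- Class K∞ function. -/
def ClassKInf (α : ℝ → ℝ) : Prop :=
  ClassK α ∧ Tendsto α atTop atTop

/-- Class KL function (with discrete time argument). -/
def ClassKLNat (β : ℝ → ℕ → ℝ) : Prop :=
  (∀ k : ℕ, ClassK (fun r => β r k)) ∧
  ∀ r : ℝ, 0 < r → Antitone (β r) ∧ Tendsto (β r) atTop (nhds 0)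

/-- Solution map of the discrete-time control system `ξ(k+1) = f(ξ(k), υ(k))`. -/
def sol {E F : Type*} (f : E → F → E) (x : E) (υ : ℕ → F) : ℕ → E
  | 0 => x
  | k + 1 => f (sol f x υ k) (υ k)

/-- The η-grid approximation `[A]_η` of a set `A ⊆ ℝ^N` (with the sup norm). -/
def gridApprox {N : ℕ} (η : ℝ) (A : Set (Fin N → ℝ)) : Set (Fin N → ℝ) :=
  {a ∈ A | ∀ i, ∃ k : ℤ, a i = k * η}

/-- `A` is a (nonempty) finite union of boxes, each of span at least `η`. -/
def UnionOfBoxesSpanGe {N : ℕ} (A : Set (Fin N → ℝ)) (η : ℝ) : Prop :=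
  ∃ (M : ℕ) (c d : Fin M → Fin N → ℝ),
    (∀ j i, c j i < d j i) ∧ (∀ j i, η ≤ d j i - c j i) ∧
    A = ⋃ j, {x | ∀ i, x i ∈ Icc (c j i) (d j i)}

/-- Incremental input-to-state stability (δ-ISS) of `f` on `𝕏` with inputs in `𝕌`,
witnessed by `β ∈ KL` and `γ ∈ K∞`; `c` plays the role of `‖υ - υ'‖_∞`. -/
def DeltaISS {N M : ℕ} (𝕏 : Set (Fin N → ℝ)) (𝕌 : Set (Fin M → ℝ))
    (f : (Fin N → ℝ) → (Fin M → ℝ) → Fin N → ℝ)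
    (β : ℝ → ℕ → ℝ) (γ : ℝ → ℝ) : Prop :=
  ∀ x ∈ 𝕏, ∀ x' ∈ 𝕏, ∀ υ υ' : ℕ → Fin M → ℝ,
    (∀ j, υ j ∈ 𝕌) → (∀ j, υ' j ∈ 𝕌) →
    ∀ c : ℝ, 0 ≤ c → (∀ j, ‖υ j - υ' j‖ ≤ c) →
    ∀ k : ℕ, ‖sol f x υ k - sol f x' υ' k‖ ≤ β ‖x - x'‖ k + γ c

end Defs



section Aux

lemma exists_grid_near {N : ℕ} {A : Set (Fin N → ℝ)} {η : ℝ} (hη : 0 < η)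
    (hA : UnionOfBoxesSpanGe A η) {a : Fin N → ℝ} (ha : a ∈ A) :
    ∃ b ∈ gridApprox η A, ‖a - b‖ ≤ η := by
  obtain ⟨M, c, d, hcd, hspan, rfl⟩ := hA
  obtain ⟨j, hj⟩ := mem_iUnion.mp ha
  set b : Fin N → ℝ := fun i =>
    (if ((⌊a i / η⌋ : ℝ) * η) < c j i then ((⌊a i / η⌋ : ℝ) + 1) else (⌊a i / η⌋ : ℝ)) * η
    with hb
  have hfl : ∀ i, (⌊a i / η⌋ : ℝ) * η ≤ a i := by
    intro i
    have := Int.floor_le (a i / η)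
    calc (⌊a i / η⌋ : ℝ) * η ≤ (a i / η) * η := by nlinarith
    _ = a i := by field_simp
  have hfl2 : ∀ i, a i < ((⌊a i / η⌋ : ℝ) + 1) * η := by
    intro i
    have := Int.lt_floor_add_one (a i / η)
    calc a i = (a i / η) * η := by field_simp
    _ < ((⌊a i / η⌋ : ℝ) + 1) * η := by nlinarith
  have hmem : ∀ i, b i ∈ Icc (c j i) (d j i) ∧ |a i - b i| ≤ η := by
    intro i
    have hji := hj i
    simp only [hb]
    split_ifs with hc
    · constructor
      · constructor
        · nlinarith [hji.1, hfl2 i]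
        · nlinarith [hspan j i, hc]
      · rw [abs_le]; constructor <;> nlinarith [hfl i, hfl2 i]
    · constructor
      · constructor
        · linarith
        · linarith [hji.2, hfl i]
      · rw [abs_le]; constructor <;> nlinarith [hfl i, hfl2 i]
  refine ⟨b, ⟨mem_iUnion.mpr ⟨j, fun i => (hmem i).1⟩, ?_⟩, ?_⟩
  · intro i
    simp only [hb]
    split_ifs
    · exact ⟨⌊a i / η⌋ + 1, by push_cast; ring⟩
    · exact ⟨⌊a i / η⌋, rfl⟩
  · rw [pi_norm_le_iff_of_nonneg hη.le]
    intro i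
    rw [Pi.sub_apply, Real.norm_eq_abs]
    exact (hmem i).2

lemma ClassK.monoOn {α : ℝ → ℝ} (h : ClassK α) : MonotoneOn α (Ici 0) :=
  h.2.1.monotoneOn

lemma ClassK.nonneg {α : ℝ → ℝ} (h : ClassK α) {s : ℝ} (hs : 0 ≤ s) : 0 ≤ α s :=
  h.2.2 ▸ h.monoOn self_mem_Ici hs hs

end Aux

/-- Theorem 6.8: Lyapunov-based construction: under a δ-ISS
Lyapunov function `V`, the relation `{(x, x_q) : V(x, x_q) ≤ α₁(α⁻¹(ε))}` is an
ε-InitSOP simulation relation from `S(Σ)` to `S_q(Σ)`. -/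
theorem control_initSOP_sim_lyapunov {N M P : ℕ}
    (𝕏 𝕊 : Set (Fin N → ℝ)) (𝕌 : Set (Fin M → ℝ))
    (f : (Fin N → ℝ) → (Fin M → ℝ) → Fin N → ℝ)
    (h : (Fin N → ℝ) → Fin P → ℝ)
    (hS𝕏 : 𝕊 ⊆ 𝕏) (hinv : ∀ x ∈ 𝕏, ∀ u ∈ 𝕌, f x u ∈ 𝕏)
    (α : ℝ → ℝ) (hα : ClassKInf α) (hLip : ∀ x y, ‖h x - h y‖ ≤ α ‖x - y‖)
    (V : (Fin N → ℝ) → (Fin N → ℝ) → ℝ)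
    (hVcont : Continuous fun p : (Fin N → ℝ) × (Fin N → ℝ) => V p.1 p.2)
    (α₁ α₂ κ lam γhat : ℝ → ℝ)
    (hα₁ : ClassKInf α₁) (hα₂ : ClassKInf α₂) (hκ : ClassKInf κ)
    (hlam : ClassKInf lam) (hγhat : ClassKInf γhat)
    (hκlt : ∀ s : ℝ, 0 < s → κ s < s)
    (hV1 : ∀ x ∈ 𝕏, ∀ x' ∈ 𝕏, α₁ ‖x - x'‖ ≤ V x x' ∧ V x x' ≤ α₂ ‖x - x'‖)
    (hdecay : ∀ x ∈ 𝕏, ∀ x' ∈ 𝕏, ∀ u ∈ 𝕌, ∀ u' ∈ 𝕌,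
      V (f x u) (f x' u') ≤ max (κ (V x x')) (lam ‖u - u'‖))
    (hsupp : ∀ x ∈ 𝕏, ∀ x' ∈ 𝕏, ∀ x'' ∈ 𝕏, V x x' - V x' x'' ≤ γhat ‖x - x''‖)
    (ε η μ r : ℝ) (hε : 0 < ε) (hη : 0 < η) (hμ : 0 < μ)
    (hr : 0 ≤ r) (hrε : α r = ε)
    (hboxS : UnionOfBoxesSpanGe 𝕊 η) (hboxXS : UnionOfBoxesSpanGe (𝕏 \ 𝕊) η)
    (hboxU : UnionOfBoxesSpanGe 𝕌 μ)
    (hq1 : α₂ η ≤ α₁ r)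
    (hq2 : max (κ (α₁ r)) (lam μ) + γhat η ≤ α₁ r) :
    InitSOPSim 𝕏 𝕊 (fun x u x' => x ∈ 𝕏 ∧ u ∈ 𝕌 ∧ x' = f x u) h
      (gridApprox η 𝕏) (gridApprox η 𝕊)
      (fun xq uq xq' => xq ∈ gridApprox η 𝕏 ∧ uq ∈ gridApprox μ 𝕌 ∧
        xq' ∈ gridApprox η 𝕏 ∧ ‖xq' - f xq uq‖ ≤ η) h
      ε {p | p.1 ∈ 𝕏 ∧ p.2 ∈ gridApprox η 𝕏 ∧ V p.1 p.2 ≤ α₁ r} := by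
  have hαm := hα.1.monoOn
  have hα₁m := hα₁.1.monoOn
  have hα₂m := hα₂.1.monoOn
  have hκm := hκ.1.monoOn
  have hlamm := hlam.1.monoOn
  have hγm := hγhat.1.monoOn
  have hGX : gridApprox η 𝕏 ⊆ 𝕏 := fun a ha => ha.1
  have hGS : gridApprox η 𝕊 ⊆ 𝕊 := fun a ha => ha.1
  have hGU : gridApprox μ 𝕌 ⊆ 𝕌 := fun a ha => ha.1
  have hGSX : gridApprox η 𝕊 ⊆ gridApprox η 𝕏 := fun a ha => ⟨hS𝕏 ha.1, ha.2⟩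
  have hα₁r0 : 0 ≤ α₁ r := hα₁.1.nonneg hr
  have hV0 : ∀ x ∈ 𝕏, ∀ x' ∈ 𝕏, 0 ≤ V x x' := by
    intro x hx x' hx'
    exact le_trans (hα₁.1.nonneg (norm_nonneg _)) (hV1 x hx x' hx').1
  have hVsym : ∀ x ∈ 𝕏, ∀ x' ∈ 𝕏, V x x' ≤ V x' x := by
    intro x hx x' hx'
    have := hsupp x hx x' hx' x hx
    simp only [sub_self, norm_zero] at this
    rw [hγhat.1.2.2] at this
    linarith
  have key : ∀ x ∈ 𝕏, ∀ xq ∈ 𝕏, V x xq ≤ α₁ r →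
      ∀ u ∈ 𝕌, ∀ uq ∈ 𝕌, ‖u - uq‖ ≤ μ →
      ∀ xq' ∈ 𝕏, ‖xq' - f xq uq‖ ≤ η → V (f x u) xq' ≤ α₁ r := by
    intro x hx xq hxq hVxq u hu uq huq huu xq' hxq' hnear
    have hx' : f x u ∈ 𝕏 := hinv x hx u hu
    have hfq : f xq uq ∈ 𝕏 := hinv xq hxq uq huq
    have h1 : V (f x u) (f xq uq) ≤ max (κ (α₁ r)) (lam μ) := by
      refine le_trans (hdecay x hx xq hxq u hu uq huq) (max_le_max ?_ ?_)
      · exact hκm (hV0 x hx xq hxq) hα₁r0 hVxq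
      · exact hlamm (norm_nonneg _) hμ.le huu
    have h2 : V xq' (f x u) - V (f x u) (f xq uq) ≤ γhat ‖xq' - f xq uq‖ :=
      hsupp xq' hxq' (f x u) hx' (f xq uq) hfq
    have h3 : γhat ‖xq' - f xq uq‖ ≤ γhat η := hγm (norm_nonneg _) hη.le hnear
    have h4 : V (f x u) xq' ≤ V xq' (f x u) := hVsym _ hx' _ hxq'
    linarith [hq2]
  refine ⟨?_, ?_, ?_, ?_, ?_⟩
  · rintro x0 ⟨hx0X, hx0S⟩
    obtain ⟨b, hbG, hbn⟩ := exists_grid_near hη hboxS hx0S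
    refine ⟨b, ⟨hGSX hbG, hbG⟩, hx0X, hGSX hbG, ?_⟩
    have hb𝕏 : b ∈ 𝕏 := hS𝕏 (hGS hbG)
    calc V x0 b ≤ α₂ ‖x0 - b‖ := (hV1 x0 hx0X b hb𝕏).2
    _ ≤ α₂ η := hα₂m (norm_nonneg _) hη.le hbn
    _ ≤ α₁ r := hq1
  · rintro xq ⟨hxqX, hxqS⟩
    have hxq𝕏 : xq ∈ 𝕏 := hGX hxqX
    have hxqnS : xq ∉ 𝕊 := fun hxs => hxqS ⟨hxs, hxqX.2⟩
    refine ⟨xq, ⟨hxq𝕏, hxqnS⟩, hxq𝕏, hxqX, ?_⟩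
    calc V xq xq ≤ α₂ ‖xq - xq‖ := (hV1 xq hxq𝕏 xq hxq𝕏).2
    _ = 0 := by rw [sub_self, norm_zero, hα₂.1.2.2]
    _ ≤ α₁ r := hα₁r0
  · rintro ⟨x, xq⟩ ⟨hx, hxq, hV⟩
    have hxq𝕏 : xq ∈ 𝕏 := hGX hxq
    have hle : ‖x - xq‖ ≤ r := by
      by_contra hgt
      push_neg at hgt
      have := hα₁.1.2.1 (mem_Ici.mpr hr) (mem_Ici.mpr (norm_nonneg (x - xq))) hgt
      linarith [(hV1 x hx xq hxq𝕏).1]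
    calc dist (h x) (h xq) = ‖h x - h xq‖ := dist_eq_norm _ _
    _ ≤ α ‖x - xq‖ := hLip x xq
    _ ≤ α r := hαm (norm_nonneg _) hr hle
    _ = ε := hrε
  · rintro ⟨x, xq⟩ ⟨hx, hxq, hVr⟩ u x' ⟨_, hu, rfl⟩
    have hxq𝕏 : xq ∈ 𝕏 := hGX hxq
    obtain ⟨uq, huqG, huqn⟩ := exists_grid_near hμ hboxU hu
    have huq : uq ∈ 𝕌 := hGU huqG
    have hfq : f xq uq ∈ 𝕏 := hinv xq hxq𝕏 uq huq
    obtain ⟨xq', hxq'G, hxq'n⟩ :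
        ∃ xq' ∈ gridApprox η 𝕏, ‖f xq uq - xq'‖ ≤ η := by
      by_cases hs : f xq uq ∈ 𝕊
      · obtain ⟨b, hbG, hbn⟩ := exists_grid_near hη hboxS hs
        exact ⟨b, hGSX hbG, hbn⟩
      · obtain ⟨b, hbG, hbn⟩ := exists_grid_near hη hboxXS ⟨hfq, hs⟩
        exact ⟨b, ⟨hbG.1.1, hbG.2⟩, hbn⟩
    have hxq'𝕏 : xq' ∈ 𝕏 := hGX hxq'G
    have hnear : ‖xq' - f xq uq‖ ≤ η := by rwa [norm_sub_rev]
    exact ⟨uq, xq', ⟨hxq, huqG, hxq'G, hnear⟩,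
      hinv x hx u hu, hxq'G,
      key x hx xq hxq𝕏 hVr u hu uq huq huqn xq' hxq'𝕏 hnear⟩
  · rintro ⟨x, xq⟩ ⟨hx, hxq, hVr⟩ uq xq' ⟨_, huqG, hxq'G, hnear⟩
    have hxq𝕏 : xq ∈ 𝕏 := hGX hxq
    have huq : uq ∈ 𝕌 := hGU huqG
    have hxq'𝕏 : xq' ∈ 𝕏 := hGX hxq'G
    refine ⟨uq, f x uq, ⟨hx, huq, rfl⟩, hinv x hx uq huq, hxq'G, ?_⟩
    refine key x hx xq hxq𝕏 hVr uq huq uq huq ?_ xq' hxq'𝕏 hnear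
    rw [sub_self, norm_zero]
    exact hμ.le
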